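/- Let s be a positive integer and let (d₁, …, d_s) be a connected tuple of dimers in the infinite grid, meaning the graph on {1, …, s} with edges between overlapping dimers is connected. If the tuple has width w (number of columns meeting some dimer) and height h (number of rows meeting some dimer), then (w − 1) + (h − 1) ≤ s, that is, w + h ≤ s + 2. -/

import Mathlib

/-- A dimer in the infinite grid `ℤ²`, given as an ordered pair of cells
`((x, y), (x', y'))`; `isZDimer` says the two cells are edge-adjacent with the first
cell immediately left of or below the second. -/
def isZDimer (d : (ℤ × ℤ) × (ℤ × ℤ)) : Prop :=
  (d.1.1 = d.2.1 ∧ d.1.2 + 1 = d.2.2) ∨ (d.1.2 = d.2.2 ∧ d.1.1 + 1 = d.2.1)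

/-- Two dimers overlap if they share a cell. -/
def overlapZ (d e : (ℤ × ℤ) × (ℤ × ℤ)) : Prop :=
  d.1 = e.1 ∨ d.1 = e.2 ∨ d.2 = e.1 ∨ d.2 = e.2

lemma dimer_cols {p : (ℤ × ℤ) × (ℤ × ℤ)} (h : isZDimer p) :
    p.1.1 ≤ p.2.1 ∧ p.2.1 ≤ p.1.1 + 1 := by
  rcases h with ⟨h1, h2⟩ | ⟨h1, h2⟩ <;> omega

lemma cut_lemma {s : ℕ} (d : Fin s → (ℤ × ℤ) × (ℤ × ℤ)) (hdim : ∀ i, isZDimer (d i))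
    (hconn : (SimpleGraph.fromRel (fun i j => overlapZ (d i) (d j))).Connected)
    (c : ℤ) (i0 i1 : Fin s) (h0 : (d i0).1.1 ≤ c) (h1 : c < (d i1).2.1) :
    ∃ i, (d i).1.1 = c ∧ (d i).2.1 = c + 1 := by
  have hreach : Relation.ReflTransGen
      (SimpleGraph.fromRel (fun i j => overlapZ (d i) (d j))).Adj i0 i1 := by
    rw [← SimpleGraph.reachable_iff_reflTransGen]
    exact hconn.preconnected i0 i1
  suffices H : (∃ i, (d i).1.1 = c ∧ (d i).2.1 = c + 1) ∨ (d i1).2.1 ≤ c by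
    rcases H with h | h
    · exact h
    · omega
  clear h1
  induction hreach with
  | refl =>
      have h := dimer_cols (hdim i0)
      by_cases hc : (d i0).2.1 ≤ c
      · right; exact hc
      · left; exact ⟨i0, by omega, by omega⟩
  | @tail j k hjk hadj ih =>
      rcases ih with h | hj
      · exact Or.inl h
      rw [SimpleGraph.fromRel_adj] at hadj
      obtain ⟨-, hov⟩ := hadj
      have hj' := dimer_cols (hdim j)
      have hk' := dimer_cols (hdim k)
      have hmk : (d k).1.1 ≤ c := by
        rcases hov with (h | h | h | h) | (h | h | h | h) <;>
          · have h' := congrArg Prod.fst h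
            omega
      by_cases hc : (d k).2.1 ≤ c
      · right; exact hc
      · left; exact ⟨k, by omega, by omega⟩

lemma width_le {s : ℕ} (hs : 1 ≤ s) (d : Fin s → (ℤ × ℤ) × (ℤ × ℤ))
    (hdim : ∀ i, isZDimer (d i))
    (hconn : (SimpleGraph.fromRel (fun i j => overlapZ (d i) (d j))).Connected) :
    (Finset.univ.image (fun i => (d i).1.1) ∪ Finset.univ.image (fun i => (d i).2.1)).card
      ≤ (Finset.univ.filter (fun i => (d i).1.2 = (d i).2.2)).card + 1 := by
  set X := (Finset.univ.image (fun i => (d i).1.1) ∪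
      Finset.univ.image (fun i => (d i).2.1)) with hX
  have hne : X.Nonempty := by
    refine ⟨(d ⟨0, hs⟩).1.1, ?_⟩
    simp [hX]
  set a := X.min' hne with ha
  set b := X.max' hne with hb
  have hab : a ≤ b := X.min'_le b (X.max'_mem hne)
  have hmem : ∀ x ∈ X, ∃ i, (d i).1.1 ≤ x ∧ x ≤ (d i).2.1 := by
    intro x hx
    simp only [hX, Finset.mem_union, Finset.mem_image, Finset.mem_univ, true_and] at hx
    rcases hx with ⟨i, hi⟩ | ⟨i, hi⟩ <;> have := dimer_cols (hdim i) <;> exact ⟨i, by omega⟩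
  have hsub : Finset.Ico a b ⊆
      (Finset.univ.filter (fun i => (d i).1.2 = (d i).2.2)).image (fun i => (d i).1.1) := by
    intro c hc
    rw [Finset.mem_Ico] at hc
    obtain ⟨i0, hi0⟩ := hmem a (X.min'_mem hne)
    obtain ⟨i1, hi1⟩ := hmem b (X.max'_mem hne)
    obtain ⟨i, hc1, hc2⟩ := cut_lemma d hdim hconn c i0 i1 (by omega) (by omega)
    have hhor : (d i).1.2 = (d i).2.2 := by
      rcases hdim i with ⟨h1, h2⟩ | ⟨h1, h2⟩
      · omega
      · exact h1
    simp only [Finset.mem_image, Finset.mem_filter, Finset.mem_univ, true_and]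
    exact ⟨i, hhor, hc1⟩
  have h1 : (Finset.Ico a b).card ≤
      (Finset.univ.filter (fun i => (d i).1.2 = (d i).2.2)).card :=
    le_trans (Finset.card_le_card hsub) Finset.card_image_le
  have h2 : X.card ≤ (Finset.Icc a b).card :=
    Finset.card_le_card (fun x hx => Finset.mem_Icc.mpr ⟨X.min'_le x hx, X.le_max' x hx⟩)
  rw [Int.card_Icc] at h2
  rw [Int.card_Ico] at h1
  omega

/-- Swap the x and y coordinates of both cells of a dimer. -/
def dswap (p : (ℤ × ℤ) × (ℤ × ℤ)) : (ℤ × ℤ) × (ℤ × ℤ) :=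
  ((p.1.2, p.1.1), (p.2.2, p.2.1))

lemma isZDimer_dswap {p : (ℤ × ℤ) × (ℤ × ℤ)} (h : isZDimer p) : isZDimer (dswap p) := by
  rcases h with ⟨h1, h2⟩ | ⟨h1, h2⟩
  · exact Or.inr ⟨h1, h2⟩
  · exact Or.inl ⟨h1, h2⟩

lemma overlap_dswap (p q : (ℤ × ℤ) × (ℤ × ℤ)) :
    overlapZ (dswap p) (dswap q) ↔ overlapZ p q := by
  simp only [overlapZ, dswap, Prod.mk.injEq, Prod.ext_iff]
  tauto

lemma fromRel_congr {α : Type*} {r r' : α → α → Prop} (h : ∀ a b, r a b ↔ r' a b) :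
    SimpleGraph.fromRel r = SimpleGraph.fromRel r' := by
  ext a b
  simp only [SimpleGraph.fromRel_adj, h]

/-- For a connected tuple `(d₁, …, d_s)` of dimers in `ℤ²` (the intersection graph of
overlaps is connected) of width `w` (number of columns met) and height `h` (number of
rows met), one has `(w - 1) + (h - 1) ≤ s`, i.e. `w + h ≤ s + 2`. -/
theorem connected_tuple_width_height (s : ℕ) (hs : 1 ≤ s)
    (d : Fin s → (ℤ × ℤ) × (ℤ × ℤ)) (hdim : ∀ i, isZDimer (d i))
    (hconn : (SimpleGraph.fromRel (fun i j => overlapZ (d i) (d j))).Connected) :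
    (Finset.univ.image (fun i => (d i).1.1) ∪ Finset.univ.image (fun i => (d i).2.1)).card
      + (Finset.univ.image (fun i => (d i).1.2) ∪ Finset.univ.image (fun i => (d i).2.2)).card
      ≤ s + 2 := by
  have hdim' : ∀ i, isZDimer (dswap (d i)) := fun i => isZDimer_dswap (hdim i)
  have hconn' : (SimpleGraph.fromRel
      (fun i j => overlapZ (dswap (d i)) (dswap (d j)))).Connected := by
    rw [fromRel_congr (fun i j => overlap_dswap (d i) (d j))]
    exact hconn
  have hw := width_le hs d hdim hconn
  have hh := width_le hs (fun i => dswap (d i)) hdim' hconn'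
  simp only [dswap] at hh
  -- count horizontal and vertical dimers
  have hdisj : (Finset.univ.filter (fun i => (d i).1.1 = (d i).2.1)) ⊆
      (Finset.univ.filter (fun i => ¬ ((d i).1.2 = (d i).2.2))) := by
    intro i hi
    rw [Finset.mem_filter] at hi ⊢
    refine ⟨Finset.mem_univ i, ?_⟩
    rcases hdim i with ⟨h1, h2⟩ | ⟨h1, h2⟩ <;> omega
  have hcount : (Finset.univ.filter (fun i => (d i).1.2 = (d i).2.2)).card +
      (Finset.univ.filter (fun i => ¬ ((d i).1.2 = (d i).2.2))).card =
      (Finset.univ : Finset (Fin s)).card := Finset.card_filter_add_card_filter_not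
    (s := (Finset.univ : Finset (Fin s))) (p := fun i => (d i).1.2 = (d i).2.2)
  have hh2 : (Finset.univ.image (fun i => (d i).1.2) ∪ Finset.univ.image (fun i => (d i).2.2)).card
      ≤ (Finset.univ.filter (fun i => (d i).1.1 = (d i).2.1)).card + 1 := hh
  have hVle : (Finset.univ.filter (fun i => (d i).1.1 = (d i).2.1)).card ≤
      (Finset.univ.filter (fun i => ¬ ((d i).1.2 = (d i).2.2))).card :=
    Finset.card_le_card hdisj
  simp only [Finset.card_univ, Fintype.card_fin] at hcount
  omega
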